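/- arXiv:2208.04812 — 2 statements merged into one kernel-verified Lean document; each statement's English description precedes it below -/
import Mathlib

section
/- Let T be a densely defined closable linear operator on a complex Hilbert space with σ(p(T)) ≠ ℂ for a complex polynomial p. Then the closure of p(T) equals p applied to the closure of T, i.e. cl(p(T)) = p(cl(T)). -/
open LinearPMap

set_option linter.unusedSectionVars false

noncomputable section

section BanachDefs

variable {H : Type*} [NormedAddCommGroup H] [NormedSpace ℂ H]

/-- Composition `g ∘ f` of unbounded operators, with the natural (maximal) domain
`{x ∈ dom f : f x ∈ dom g}`. -/
def LinearPMap.pComp (g f : H →ₗ.[ℂ] H) : H →ₗ.[ℂ] H where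
  domain := (g.domain.comap f.toFun).map f.domain.subtype
  toFun := g.toFun ∘ₗ (f.toFun.restrict (p := g.domain.comap f.toFun) (q := g.domain)
      (fun _ hx => hx)) ∘ₗ
    ((Submodule.equivMapOfInjective f.domain.subtype (Submodule.injective_subtype _)
      (g.domain.comap f.toFun)).symm).toLinearMap

/-- `n`-th power of an unbounded operator; `T^0` is the identity on all of `H`. -/
def LinearPMap.pPow (T : H →ₗ.[ℂ] H) : ℕ → (H →ₗ.[ℂ] H)
  | 0 => (LinearMap.id : H →ₗ[ℂ] H).toPMap ⊤
  | n + 1 => T.pComp (T.pPow n)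

theorem LinearPMap.pPow_domain_succ_le (T : H →ₗ.[ℂ] H) (n : ℕ) :
    (T.pPow (n + 1)).domain ≤ (T.pPow n).domain := by
  intro x hx
  simp_rw [pPow, pComp] at hx
  obtain ⟨y, -, rfl⟩ := hx
  exact y.2

theorem LinearPMap.pPow_domain_le (T : H →ₗ.[ℂ] H) {i n : ℕ} (h : i ≤ n) :
    (T.pPow n).domain ≤ (T.pPow i).domain := by
  induction n with
  | zero => exact Nat.le_zero.mp h ▸ le_rfl
  | succ n ih =>
    rcases Nat.lt_succ_iff_lt_or_eq.mp (Nat.lt_succ_of_le h) with h' | rfl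
    · exact le_trans (T.pPow_domain_succ_le n) (ih (Nat.lt_succ_iff.mp h'))
    · exact le_rfl

/-- `p(T)` for a complex polynomial `p`, defined on `D(T^n)` where `n = deg p`. -/
def LinearPMap.polyApp (p : Polynomial ℂ) (T : H →ₗ.[ℂ] H) : H →ₗ.[ℂ] H where
  domain := (T.pPow p.natDegree).domain
  toFun := ∑ i ∈ (Finset.range (p.natDegree + 1)).attach,
    p.coeff i.1 • ((T.pPow i.1).toFun ∘ₗ Submodule.inclusion
      (T.pPow_domain_le (Nat.lt_succ_iff.mp (Finset.mem_range.mp i.2))))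

/-- `A - μ • I` with domain `dom A`. -/
def LinearPMap.subConst (A : H →ₗ.[ℂ] H) (μ : ℂ) : H →ₗ.[ℂ] H :=
  ⟨A.domain, A.toFun - μ • A.domain.subtype⟩

/-- An unbounded operator is boundedly invertible if it is bijective from its domain onto `H`
with an everywhere-defined bounded (continuous) inverse. -/
def LinearPMap.IsBddInvertible (A : H →ₗ.[ℂ] H) : Prop :=
  ∃ B : H →L[ℂ] H, (∀ y : H, ∃ hy : B y ∈ A.domain, A ⟨B y, hy⟩ = y) ∧
    ∀ x : A.domain, B (A x) = (x : H)

/-- The spectrum of an unbounded operator: `μ ∉ σ(A)` iff `A - μI` is bijective with a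
bounded everywhere-defined inverse. -/
def LinearPMap.pSpectrum (A : H →ₗ.[ℂ] H) : Set ℂ :=
  {μ | ¬ (A.subConst μ).IsBddInvertible}

/-- The kernel of an unbounded operator, as a subset of `H`. -/
def LinearPMap.pKer (A : H →ₗ.[ℂ] H) : Set H :=
  {x | ∃ hx : x ∈ A.domain, A ⟨x, hx⟩ = 0}

/-- The range of an unbounded operator. -/
def LinearPMap.pRan (A : H →ₗ.[ℂ] H) : Set H :=
  Set.range fun x : A.domain => A x

/-- A bounded everywhere-defined operator seen as an unbounded operator. -/
def ContinuousLinearMap.toPMapTop (B : H →L[ℂ] H) : H →ₗ.[ℂ] H :=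
  (B : H →ₗ[ℂ] H).toPMap ⊤

end BanachDefs

section HilbertDefs

variable {H : Type*} [NormedAddCommGroup H] [InnerProductSpace ℂ H] [CompleteSpace H]

/-- A densely defined closed operator is quasinormal if `T T* T = T* T T`. -/
def LinearPMap.IsQuasinormal (T : H →ₗ.[ℂ] H) : Prop :=
  T.IsClosed ∧ Dense (T.domain : Set H) ∧
    T.pComp (T.adjoint.pComp T) = T.adjoint.pComp (T.pComp T)

/-- A densely defined closed operator is normal if `T* T = T T*` (an equality of unbounded
operators, domains included). -/
def LinearPMap.IsNormal (T : H →ₗ.[ℂ] H) : Prop :=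
  T.IsClosed ∧ Dense (T.domain : Set H) ∧ T.adjoint.pComp T = T.pComp T.adjoint

/-- A symmetric (not necessarily densely defined) operator. -/
def LinearPMap.IsSymm (T : H →ₗ.[ℂ] H) : Prop :=
  ∀ x y : T.domain, inner ℂ (T x) (y : H) = (inner ℂ (x : H) (T y) : ℂ)

/-- A paranormal operator: `‖Tx‖² ≤ ‖T²x‖ ‖x‖` for every `x ∈ D(T²)`. -/
def LinearPMap.IsParanormal (T : H →ₗ.[ℂ] H) : Prop :=
  ∀ (x : H) (hx : x ∈ T.domain) (hTx : T ⟨x, hx⟩ ∈ T.domain),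
    ‖T ⟨x, hx⟩‖ ^ 2 ≤ ‖T ⟨T ⟨x, hx⟩, hTx⟩‖ * ‖x‖

end HilbertDefs

end


/-!
Fix `μ ∉ σ(A)`, `A = p(T)`, and let `B` be the bounded inverse of `A - μ`. An operator with a
bounded inverse is closed, so `cl A = A ≤ p(cl T)`, and since `A - μ` is already onto, equality
follows once `p(cl T) - μ` is injective. Reading `(A - μ) B = 1` through the (invertible) leading
coefficient of `p` shows that `B` maps `D(T)` into `D(Tⁿ⁺¹)`, `n = deg p`, and commutes with `T`;
so `B × B` preserves the graph of `T` and, by continuity, that of `cl T`. Hence if `cl T v = λ v`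
with `p(λ) = μ`, then `B v` is an eigenvector of `T` itself, and
`v = (A - μ) B v = (p(λ) - μ) B v = 0`. Splitting `p - μ` into linear factors over `ℂ` then gives
the injectivity of `p(cl T) - μ`.
-/

namespace LinearPMap

open Polynomial

variable {H : Type*} [NormedAddCommGroup H] [NormedSpace ℂ H]

open Classical in
/-- `f x` on `f.domain`, and the junk value `0` outside it. -/
noncomputable def app (f : H →ₗ.[ℂ] H) (x : H) : H :=
  if hx : x ∈ f.domain then f ⟨x, hx⟩ else 0

theorem app_of_mem (f : H →ₗ.[ℂ] H) {x : H} (hx : x ∈ f.domain) : f.app x = f ⟨x, hx⟩ :=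
  dif_pos hx

@[simp]
theorem app_coe (f : H →ₗ.[ℂ] H) (x : f.domain) : f.app x = f x :=
  f.app_of_mem x.2

theorem app_smul (f : H →ₗ.[ℂ] H) (c : ℂ) {x : H} (hx : x ∈ f.domain) :
    f.app (c • x) = c • f.app x := by
  rw [f.app_of_mem (f.domain.smul_mem c hx), f.app_of_mem hx]
  exact f.map_smul c ⟨x, hx⟩

theorem app_sub (f : H →ₗ.[ℂ] H) {x y : H} (hx : x ∈ f.domain) (hy : y ∈ f.domain) :
    f.app (x - y) = f.app x - f.app y := by
  rw [f.app_of_mem (sub_mem hx hy), f.app_of_mem hx, f.app_of_mem hy]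
  exact f.map_sub ⟨x, hx⟩ ⟨y, hy⟩

theorem app_sum_smul (f : H →ₗ.[ℂ] H) {ι : Type*} (s : Finset ι) (c : ι → ℂ) (v : ι → H)
    (hv : ∀ i ∈ s, v i ∈ f.domain) :
    f.app (∑ i ∈ s, c i • v i) = ∑ i ∈ s, c i • f.app (v i) := by
  calc f.app (∑ i ∈ s, c i • v i)
      = f (∑ i ∈ s.attach, c i • (⟨v i, hv i i.2⟩ : f.domain)) := by
        rw [← app_coe, Submodule.coe_sum]
        exact congrArg f.app (Finset.sum_attach s (fun i => c i • v i)).symm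
    _ = ∑ i ∈ s.attach, c i • f.app (v i) := by
        refine (map_sum f.toFun _ _).trans ?_
        refine Finset.sum_congr rfl fun i _ => ?_
        exact (f.toFun.map_smul _ _).trans (congrArg _ (f.app_of_mem (hv i i.2)).symm)
    _ = ∑ i ∈ s, c i • f.app (v i) := Finset.sum_attach s (fun i => c i • f.app (v i))

theorem mem_graph_iff_app (f : H →ₗ.[ℂ] H) {x y : H} :
    (x, y) ∈ f.graph ↔ x ∈ f.domain ∧ f.app x = y := by
  rw [mem_graph_iff]
  constructor
  · rintro ⟨x', rfl, rfl⟩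
    exact ⟨x'.2, f.app_coe x'⟩
  · rintro ⟨hx, rfl⟩
    exact ⟨⟨x, hx⟩, rfl, (f.app_of_mem hx).symm⟩

theorem app_eq_of_le {f g : H →ₗ.[ℂ] H} (h : f ≤ g) {x : H} (hx : x ∈ f.domain) :
    g.app x = f.app x := by
  rw [f.app_of_mem hx, g.app_of_mem (h.1 hx)]
  exact (h.2 rfl).symm

theorem mem_pComp_domain {g f : H →ₗ.[ℂ] H} {x : H} :
    x ∈ (g.pComp f).domain ↔ x ∈ f.domain ∧ f.app x ∈ g.domain := by
  constructor
  · rintro ⟨x', hx', rfl⟩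
    exact ⟨x'.2, by simpa using hx'⟩
  · rintro ⟨hx, hfx⟩
    exact ⟨⟨x, hx⟩, by simpa [f.app_of_mem hx] using hfx, rfl⟩

theorem pComp_app {g f : H →ₗ.[ℂ] H} {x : H} (hx : x ∈ (g.pComp f).domain) :
    (g.pComp f).app x = g.app (f.app x) := by
  obtain ⟨hxf, hfx⟩ := mem_pComp_domain.mp hx
  rw [app_of_mem _ hx, f.app_of_mem hxf, g.app_of_mem (by rwa [← f.app_of_mem hxf])]
  have hsymm : ((Submodule.equivMapOfInjective f.domain.subtype
      (Submodule.injective_subtype _) (g.domain.comap f.toFun)).symm ⟨x, hx⟩ :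
      (g.domain.comap f.toFun)) = ⟨⟨x, hxf⟩, by simpa [f.app_of_mem hxf] using hfx⟩ := by
    rw [LinearEquiv.symm_apply_eq]
    exact Subtype.ext rfl
  have hdef : (g.pComp f) ⟨x, hx⟩ = g.toFun
      ((f.toFun.restrict (p := g.domain.comap f.toFun) (q := g.domain) (fun _ hx => hx))
        ((Submodule.equivMapOfInjective f.domain.subtype (Submodule.injective_subtype _)
          (g.domain.comap f.toFun)).symm ⟨x, hx⟩)) := rfl
  rw [hdef, hsymm]
  rfl

theorem pPow_app {T : H →ₗ.[ℂ] H} {k : ℕ} {x : H} (hx : x ∈ (T.pPow k).domain) :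
    (T.pPow k).app x = T.app^[k] x := by
  induction k with
  | zero => exact app_coe _ ⟨x, hx⟩
  | succ k ih =>
    rw [pPow, pComp_app hx, ih (mem_pComp_domain.mp hx).1, Function.iterate_succ_apply']

theorem mem_pPow_domain_iff {T : H →ₗ.[ℂ] H} {k : ℕ} {x : H} :
    x ∈ (T.pPow k).domain ↔ ∀ j < k, T.app^[j] x ∈ T.domain := by
  induction k with
  | zero => exact iff_of_true trivial fun j hj => absurd hj j.not_lt_zero
  | succ k ih =>
    rw [Nat.forall_lt_succ_right, ← ih, pPow, mem_pComp_domain]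
    exact and_congr_right fun hx => by rw [pPow_app hx]

theorem iterate_app_eq_of_le {T S : H →ₗ.[ℂ] H} (h : T ≤ S) {k : ℕ} {x : H}
    (hx : ∀ j < k, T.app^[j] x ∈ T.domain) : S.app^[k] x = T.app^[k] x := by
  induction k with
  | zero => rfl
  | succ k ih =>
    rw [Nat.forall_lt_succ_right] at hx
    rw [Function.iterate_succ_apply', Function.iterate_succ_apply', ih hx.1,
      app_eq_of_le h hx.2]

/-- `q ↦ ∑ₖ qₖ • Tᵏ x`. -/
noncomputable def polyEval (T : H →ₗ.[ℂ] H) (x : H) : ℂ[X] →ₗ[ℂ] H :=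
  lsum fun k => LinearMap.toSpanSingleton ℂ H (T.app^[k] x)

theorem polyEval_eq_sum_range' (T : H →ₗ.[ℂ] H) (x : H) {q : ℂ[X]} {n : ℕ}
    (hn : q.natDegree < n) : T.polyEval x q = ∑ k ∈ Finset.range n, q.coeff k • T.app^[k] x := by
  simp only [polyEval, lsum_apply, LinearMap.toSpanSingleton_apply]
  exact sum_over_range' q (f := fun k c => c • T.app^[k] x) (fun _ => zero_smul ℂ _) n hn

theorem polyEval_eq_sum_range (T : H →ₗ.[ℂ] H) (x : H) (q : ℂ[X]) :
    T.polyEval x q = ∑ k ∈ Finset.range (q.natDegree + 1), q.coeff k • T.app^[k] x :=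
  T.polyEval_eq_sum_range' x q.natDegree.lt_succ_self

theorem polyEval_C (T : H →ₗ.[ℂ] H) (x : H) (c : ℂ) : T.polyEval x (C c) = c • x := by
  simp [polyEval]

theorem polyEval_X_mul (T : H →ₗ.[ℂ] H) (x : H) (q : ℂ[X]) :
    T.polyEval x (X * q) = T.polyEval (T.app x) q := by
  rw [polyEval_eq_sum_range' T x (n := q.natDegree + 2), polyEval_eq_sum_range,
    Finset.sum_range_succ']
  · simp [coeff_X_mul, Function.iterate_succ_apply]
  · have := natDegree_mul_le (p := (X : ℂ[X])) (q := q)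
    rw [natDegree_X] at this
    omega

theorem polyEval_eq_eval_smul {T : H →ₗ.[ℂ] H} {x : H} {a : ℂ} (hx : x ∈ T.domain)
    (hTx : T.app x = a • x) (q : ℂ[X]) : T.polyEval x q = q.eval a • x := by
  have hiter : ∀ k, T.app^[k] x = a ^ k • x := by
    intro k
    induction k with
    | zero => simp
    | succ k ih =>
      rw [Function.iterate_succ_apply', ih, T.app_smul _ hx, hTx, smul_smul, pow_succ]
  rw [polyEval_eq_sum_range, eval_eq_sum_range, Finset.sum_smul]
  simp only [hiter, smul_smul]

theorem app_polyEval {T : H →ₗ.[ℂ] H} {x : H} {q : ℂ[X]}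
    (hx : ∀ j ≤ q.natDegree, T.app^[j] x ∈ T.domain) :
    T.polyEval x q ∈ T.domain ∧ T.app (T.polyEval x q) = T.polyEval (T.app x) q := by
  have hmem : ∀ k ∈ Finset.range (q.natDegree + 1), T.app^[k] x ∈ T.domain :=
    fun k hk => hx k (Nat.lt_succ_iff.mp (Finset.mem_range.mp hk))
  rw [polyEval_eq_sum_range, polyEval_eq_sum_range, T.app_sum_smul _ _ _ hmem]
  refine ⟨Submodule.sum_mem _ fun k hk => T.domain.smul_mem _ (hmem k hk), ?_⟩
  simp only [← Function.iterate_succ_apply' T.app, Function.iterate_succ_apply]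

/-- The lower terms of `q(T) x` already lie in `D(T)`, and the leading coefficient is invertible. -/
theorem iterate_natDegree_mem_of_polyEval_mem {T : H →ₗ.[ℂ] H} {x : H} {q : ℂ[X]} (hq : q ≠ 0)
    (hx : ∀ j < q.natDegree, T.app^[j] x ∈ T.domain) (hqx : T.polyEval x q ∈ T.domain) :
    T.app^[q.natDegree] x ∈ T.domain := by
  rw [polyEval_eq_sum_range, Finset.sum_range_succ] at hqx
  have hlow : ∑ k ∈ Finset.range q.natDegree, q.coeff k • T.app^[k] x ∈ T.domain :=
    Submodule.sum_mem _ fun k hk => T.domain.smul_mem _ (hx k (Finset.mem_range.mp hk))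
  rw [← T.domain.smul_mem_iff (leadingCoeff_ne_zero.mpr hq)]
  simpa using sub_mem hqx hlow

theorem eq_zero_of_polyEval_eq_zero {S : H →ₗ.[ℂ] H} {q : ℂ[X]} (hq : q ≠ 0)
    (hroots : ∀ a, q.IsRoot a → ∀ v ∈ S.domain, S.app v = a • v → v = 0) {x : H}
    (hx : ∀ j < q.natDegree, S.app^[j] x ∈ S.domain) (hqx : S.polyEval x q = 0) : x = 0 := by
  induction hN : q.natDegree using Nat.strong_induction_on generalizing q with
  | _ N ih =>
    rcases Nat.eq_zero_or_pos N with rfl | hpos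
    · have hqC := eq_C_of_natDegree_eq_zero hN
      rw [hqC, polyEval_C] at hqx
      exact (smul_eq_zero.mp hqx).resolve_left fun h => hq (by rw [hqC, h, C_0])
    obtain ⟨a, ha⟩ := IsAlgClosed.exists_root q (by
      rw [degree_eq_natDegree hq, hN]
      exact_mod_cast hpos.ne')
    set r := q /ₘ (X - C a)
    have hqr : (X - C a) * r = q := mul_divByMonic_eq_iff_isRoot.mpr ha
    have hr : r ≠ 0 := fun h => hq (by rw [← hqr, h, mul_zero])
    have hrdeg : r.natDegree < N := by
      rw [← hN, natDegree_divByMonic q (monic_X_sub_C a), natDegree_X_sub_C]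
      omega
    have hrroots (b : ℂ) (hb : r.IsRoot b) : q.IsRoot b := by
      rw [← hqr, IsRoot, eval_mul, hb.eq_zero, mul_zero]
    have hrx := app_polyEval (q := r) fun j hj => hx j (hN ▸ hj.trans_lt hrdeg)
    refine ih r.natDegree hrdeg hr (fun b hb => hroots b (hrroots b hb))
      (fun j hj => hx j (hN ▸ hj.trans hrdeg)) ?_ rfl
    refine hroots a ha _ hrx.1 ?_
    have hfactor : S.polyEval x q = S.polyEval (S.app x) r - a • S.polyEval x r := by
      rw [← hqr, sub_mul, (S.polyEval x).map_sub, polyEval_X_mul, ← smul_eq_C_mul,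
        (S.polyEval x).map_smul]
    rw [hrx.2, ← sub_eq_zero, ← hfactor, hqx]

theorem mem_polyApp_domain_iff {p : ℂ[X]} {T : H →ₗ.[ℂ] H} {x : H} :
    x ∈ (polyApp p T).domain ↔ ∀ j < p.natDegree, T.app^[j] x ∈ T.domain :=
  mem_pPow_domain_iff

theorem polyApp_app {p : ℂ[X]} {T : H →ₗ.[ℂ] H} {x : H} (hx : x ∈ (polyApp p T).domain) :
    (polyApp p T).app x = T.polyEval x p := by
  rw [polyEval_eq_sum_range, app_of_mem _ hx,
    ← Finset.sum_attach _ (fun k => p.coeff k • T.app^[k] x)]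
  refine (LinearMap.sum_apply (M := (T.pPow p.natDegree).domain) _ _ _).trans
    (Finset.sum_congr rfl fun k _ => ?_)
  have hk := T.pPow_domain_le (Nat.lt_succ_iff.mp (Finset.mem_range.mp k.2)) hx
  rw [← pPow_app hk, app_of_mem _ hk]
  rfl

theorem polyApp_mono {T S : H →ₗ.[ℂ] H} (h : T ≤ S) (p : ℂ[X]) : polyApp p T ≤ polyApp p S := by
  have hiter {x} (hx : x ∈ (polyApp p T).domain) {k} (hk : k ≤ p.natDegree) :
      S.app^[k] x = T.app^[k] x :=
    iterate_app_eq_of_le h fun j hj => mem_polyApp_domain_iff.mp hx j (hj.trans_le hk)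
  refine ⟨fun x hx => mem_polyApp_domain_iff.mpr fun j hj => ?_, ?_⟩
  · rw [hiter hx hj.le]
    exact h.1 (mem_polyApp_domain_iff.mp hx j hj)
  · rintro ⟨x, hx⟩ ⟨y, hy⟩ (rfl : x = y)
    rw [← app_coe, ← app_coe, polyApp_app hx, polyApp_app hy,
      polyEval_eq_sum_range, polyEval_eq_sum_range]
    exact Finset.sum_congr rfl fun k hk => by
      rw [hiter hx (Nat.lt_succ_iff.mp (Finset.mem_range.mp hk))]

theorem subConst_app {A : H →ₗ.[ℂ] H} {μ : ℂ} {x : H} (hx : x ∈ A.domain) :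
    (A.subConst μ).app x = A.app x - μ • x := by
  rw [app_of_mem (A.subConst μ) hx, app_of_mem A hx]
  rfl

theorem polyApp_subConst_app {p : ℂ[X]} {T : H →ₗ.[ℂ] H} {μ : ℂ} {x : H}
    (hx : x ∈ (polyApp p T).domain) :
    ((polyApp p T).subConst μ).app x = T.polyEval x (p - C μ) := by
  rw [subConst_app hx, polyApp_app hx, (T.polyEval x).map_sub, polyEval_C]

def IsBddInverse (A : H →ₗ.[ℂ] H) (B : H →L[ℂ] H) : Prop :=
  (∀ y : H, ∃ hy : B y ∈ A.domain, A ⟨B y, hy⟩ = y) ∧ ∀ x : A.domain, B (A x) = (x : H)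

namespace IsBddInverse

variable {A : H →ₗ.[ℂ] H} {B : H →L[ℂ] H}

theorem mem_domain (hB : A.IsBddInverse B) (y : H) : B y ∈ A.domain :=
  (hB.1 y).1

theorem app_apply (hB : A.IsBddInverse B) (y : H) : A.app (B y) = y := by
  rw [A.app_of_mem (hB.mem_domain y)]
  exact (hB.1 y).2

theorem apply_app (hB : A.IsBddInverse B) {x : H} (hx : x ∈ A.domain) : B (A.app x) = x := by
  rw [A.app_of_mem hx]
  exact hB.2 ⟨x, hx⟩

theorem isClosed_of_subConst {μ : ℂ} (hB : (A.subConst μ).IsBddInverse B) : A.IsClosed := by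
  have hgraph : (A.graph : Set (H × H)) = {z | B (z.2 - μ • z.1) = z.1} := by
    ext ⟨x, y⟩
    simp only [SetLike.mem_coe, mem_graph_iff_app, Set.mem_ofPred_eq]
    constructor
    · rintro ⟨hx, rfl⟩
      rw [← subConst_app hx]
      exact hB.apply_app hx
    · intro hxy
      have hx : x ∈ A.domain := hxy ▸ hB.mem_domain _
      refine ⟨hx, ?_⟩
      have := hB.app_apply (y - μ • x)
      rwa [hxy, subConst_app hx, sub_left_inj] at this
  rw [LinearPMap.IsClosed, hgraph]
  exact isClosed_eq (by fun_prop) continuous_fst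

theorem domain_le_of_subConst {A' : H →ₗ.[ℂ] H} {μ : ℂ} (hB : (A.subConst μ).IsBddInverse B)
    (hle : A ≤ A') (hinj : ∀ x ∈ A'.domain, A'.app x = μ • x → x = 0) :
    A'.domain ≤ A.domain := by
  intro x hx
  set z := B (A'.app x - μ • x)
  have hz : z ∈ A.domain := hB.mem_domain _
  have hAz : A'.app z - μ • z = A'.app x - μ • x := by
    rw [app_eq_of_le hle hz, ← subConst_app hz]
    exact hB.app_apply _
  have hxz : x - z = 0 := by
    refine hinj _ (sub_mem hx (hle.1 hz)) ?_
    rw [A'.app_sub hx (hle.1 hz), smul_sub, ← sub_eq_zero, sub_sub_sub_comm, hAz, sub_self]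
  rwa [sub_eq_zero.mp hxz]

end IsBddInverse

theorem IsClosed.closure_eq {A : H →ₗ.[ℂ] H} (hA : A.IsClosed) : A.closure = A :=
  eq_of_eq_graph (hA.isClosable.graph_closure_eq_closure_graph.symm.trans
    hA.submodule_topologicalClosure_eq)

theorem IsClosable.mapsTo_closure_graph {T : H →ₗ.[ℂ] H} (hT : T.IsClosable)
    {Φ : H × H → H × H} (hΦ : Continuous Φ) (h : Set.MapsTo Φ T.graph T.graph) :
    Set.MapsTo Φ T.closure.graph T.closure.graph := by
  rw [← hT.graph_closure_eq_closure_graph, Submodule.topologicalClosure_coe]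
  exact h.closure hΦ

section Resolvent

variable {p : ℂ[X]} {T : H →ₗ.[ℂ] H} {μ : ℂ} {B : H →L[ℂ] H}

/-- `B T ⊆ T B`, phrased as invariance of the graph of `T` under `B × B`. -/
theorem IsBddInverse.mapsTo_graph (hn : p.natDegree ≠ 0)
    (hB : ((polyApp p T).subConst μ).IsBddInverse B) :
    Set.MapsTo (B.prodMap B) T.graph T.graph := by
  rintro ⟨x, _⟩ hxy
  obtain ⟨hx, rfl⟩ := (mem_graph_iff_app T).mp hxy
  have hdeg : (p - C μ).natDegree = p.natDegree := natDegree_sub_C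
  have hq : p - C μ ≠ 0 := fun h => hn (by rw [← hdeg, h, natDegree_zero])
  set z := B x
  have hz : ∀ j < (p - C μ).natDegree, T.app^[j] z ∈ T.domain :=
    hdeg ▸ mem_polyApp_domain_iff.mp (hB.mem_domain x)
  have hqz : T.polyEval z (p - C μ) = x := by
    rw [← polyApp_subConst_app (hB.mem_domain x)]
    exact hB.app_apply x
  have hz' : ∀ j ≤ (p - C μ).natDegree, T.app^[j] z ∈ T.domain := fun j hj =>
    (Nat.lt_or_eq_of_le hj).elim (hz j) fun h =>
      h ▸ iterate_natDegree_mem_of_polyEval_mem hq hz (hqz ▸ hx)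
  have hTz : T.app z ∈ (polyApp p T).domain := mem_polyApp_domain_iff.mpr fun j hj => by
    rw [← Function.iterate_succ_apply]
    exact hz' (j + 1) (hdeg ▸ hj)
  have hcomm := (app_polyEval hz').2
  rw [hqz, ← polyApp_subConst_app hTz] at hcomm
  refine (mem_graph_iff_app T).mpr ⟨hz' 0 (Nat.zero_le _), ?_⟩
  show T.app (B x) = B (T.app x)
  rw [hcomm, hB.apply_app hTz]

theorem IsBddInverse.eq_zero_of_closure_app_eq_smul (hT : T.IsClosable) (hn : p.natDegree ≠ 0)
    (hB : ((polyApp p T).subConst μ).IsBddInverse B) {a : ℂ} (ha : p.eval a = μ) {v : H}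
    (hv : v ∈ T.closure.domain) (hav : T.closure.app v = a • v) : v = 0 := by
  have hBv := hT.mapsTo_closure_graph (B.prodMap B).continuous (hB.mapsTo_graph hn)
    ((mem_graph_iff_app _).mpr ⟨hv, hav⟩)
  obtain ⟨-, hBv⟩ := (mem_graph_iff_app _).mp hBv
  have hBvT : B v ∈ T.domain := by
    simpa using mem_polyApp_domain_iff.mp (hB.mem_domain v) 0 (Nat.pos_of_ne_zero hn)
  have hTBv : T.app (B v) = a • B v := by
    change T.closure.app (B v) = B (a • v) at hBv
    rw [← app_eq_of_le T.le_closure hBvT, hBv, B.map_smul]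
  rw [← hB.app_apply v, polyApp_subConst_app (hB.mem_domain v), polyEval_eq_eval_smul hBvT hTBv,
    eval_sub, eval_C, ha, sub_self, zero_smul]

theorem IsBddInverse.eq_zero_of_polyApp_closure_app_eq_smul (hT : T.IsClosable)
    (hn : p.natDegree ≠ 0) (hB : ((polyApp p T).subConst μ).IsBddInverse B) {x : H}
    (hx : x ∈ (polyApp p T.closure).domain) (hμx : (polyApp p T.closure).app x = μ • x) :
    x = 0 := by
  have hdeg : (p - C μ).natDegree = p.natDegree := natDegree_sub_C
  have hq : p - C μ ≠ 0 := fun h => hn (by rw [← hdeg, h, natDegree_zero])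
  refine eq_zero_of_polyEval_eq_zero hq (fun a ha _ => hB.eq_zero_of_closure_app_eq_smul hT hn ?_)
    (hdeg ▸ mem_polyApp_domain_iff.mp hx) ?_
  · rwa [IsRoot, eval_sub, eval_C, sub_eq_zero] at ha
  · rw [← polyApp_subConst_app hx, subConst_app hx, hμx, sub_self]

end Resolvent

end LinearPMap

theorem statement_2_general {H : Type*} [NormedAddCommGroup H] [InnerProductSpace ℂ H]
    (T : H →ₗ.[ℂ] H) (hclosable : T.IsClosable)
    (p : Polynomial ℂ)
    (hspec : (LinearPMap.polyApp p T).pSpectrum ≠ Set.univ) :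
    (LinearPMap.polyApp p T).closure = LinearPMap.polyApp p T.closure := by
  obtain ⟨μ, hμ⟩ := (Set.ne_univ_iff_exists_notMem _).mp hspec
  obtain ⟨B, hB⟩ : ∃ B, ((polyApp p T).subConst μ).IsBddInverse B := not_not.mp hμ
  have hle := polyApp_mono T.le_closure p
  rw [hB.isClosed_of_subConst.closure_eq]
  refine eq_of_le_of_domain_eq hle (hle.1.antisymm ?_)
  rcases eq_or_ne p.natDegree 0 with hn | hn
  · exact fun x _ => mem_polyApp_domain_iff.mpr fun j hj => absurd hj (hn ▸ j.not_lt_zero)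
  · exact hB.domain_le_of_subConst hle fun x hx =>
      hB.eq_zero_of_polyApp_closure_app_eq_smul hclosable hn hx

/-- `cl(p(T)) = p(cl(T))` when `σ(p(T)) ≠ ℂ`. -/
theorem statement_2 {H : Type*} [NormedAddCommGroup H] [InnerProductSpace ℂ H] [CompleteSpace H]
    (T : H →ₗ.[ℂ] H) (hdense : Dense (T.domain : Set H)) (hclosable : T.IsClosable)
    (p : Polynomial ℂ)
    (hspec : (LinearPMap.polyApp p T).pSpectrum ≠ Set.univ) :
    (LinearPMap.polyApp p T).closure = LinearPMap.polyApp p T.closure :=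
  statement_2_general T hclosable p hspec
end

section
/- Let A and B be densely defined closable operators on a Hilbert space H with σ(AB) ≠ ℂ and σ(BA) ≠ ℂ. Then A and B are closed, AB and BA are densely defined and closed, and (AB)* = B*A* and (BA)* = A*B*; consequently (A*B*)* = BA and (B*A*)* = AB. -/
open LinearPMap

set_option linter.unusedSectionVars false

/-!
Choose `l ≠ 0` and `m ≠ 0` with `S = (AB - l)⁻¹` and `R = (BA - m)⁻¹` bounded; a nonzero
point exists because the resolvent set is open. By the closed graph theorem `M = A R` and
`N = B S` are bounded. On `D(A)` and `D(B)` respectively,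
`AB M = A + m M` and `AB (M B - 1) = m M B`.
Hence `D(AB)` contains `M D(A)`, whose closure contains `M H`, and `M B x - x` for `x ∈ D(B)`,
so it is dense; and for `z ∈ D((AB)*)` these identities give `A* z = M* ((AB)* z - m̄ z)` and
`B* A* z = (AB)* z`, so `(AB)* = B*A*`. An operator `T` with `S = (T - l)⁻¹` bounded has graph
`{(x, y) | S (y - l x) = x}`, so it is closed and is determined by `S`; since
`S* = (T* - l̄)⁻¹`, also `S = (T** - l)⁻¹`, whence `T** = T`.
-/

namespace LinearPMap

open ContinuousLinearMap (adjoint_inner_left)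

section Banach

variable {E : Type*} [NormedAddCommGroup E] [NormedSpace ℂ E]

theorem pComp_apply {g f : E →ₗ.[ℂ] E} {x : E} (hx : x ∈ f.domain)
    (hfx : f ⟨x, hx⟩ ∈ g.domain) (h : x ∈ (g.pComp f).domain) :
    (g.pComp f) ⟨x, h⟩ = g ⟨f ⟨x, hx⟩, hfx⟩ := by
  have hsymm : (((Submodule.equivMapOfInjective f.domain.subtype (Submodule.injective_subtype _)
      (g.domain.comap f.toFun)).symm ⟨x, h⟩ : g.domain.comap f.toFun) : f.domain) = ⟨x, hx⟩ :=
    Subtype.ext (Submodule.map_equivMapOfInjective_symm_apply _ _ _ ⟨x, h⟩)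
  exact congrArg g.toFun (Subtype.ext (congrArg f.toFun hsymm))

theorem mem_graph_pComp_iff {g f : E →ₗ.[ℂ] E} {x z : E} :
    (x, z) ∈ (g.pComp f).graph ↔ ∃ y, (x, y) ∈ f.graph ∧ (y, z) ∈ g.graph := by
  simp only [mem_graph_iff]
  constructor
  · rintro ⟨⟨x', ⟨⟨x'', hx''⟩, hfx, rfl⟩⟩, rfl, rfl⟩
    refine ⟨f ⟨x'', hx''⟩, ⟨⟨x'', hx''⟩, rfl, rfl⟩, ⟨⟨_, hfx⟩, rfl, ?_⟩⟩
    exact (pComp_apply hx'' hfx _).symm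
  · rintro ⟨_, ⟨⟨x', hx'⟩, rfl, rfl⟩, ⟨⟨y', hy'⟩, rfl, rfl⟩⟩
    exact ⟨⟨x', ⟨⟨x', hx'⟩, hy', rfl⟩⟩, rfl, pComp_apply hx' hy' _⟩

/-- `S = (T - l)⁻¹`, stated through the graph of `T`: `(T - l) S = 1` and `S (T - l) = 1`. -/
structure IsSubConstInverse (T : E →ₗ.[ℂ] E) (l : ℂ) (S : E →L[ℂ] E) : Prop where
  mem_graph : ∀ y, (S y, y + l • S y) ∈ T.graph
  apply_sub_smul : ∀ {x y}, (x, y) ∈ T.graph → S (y - l • x) = x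

theorem exists_isSubConstInverse_of_isBddInvertible {T : E →ₗ.[ℂ] E} {l : ℂ}
    (h : (T.subConst l).IsBddInvertible) : ∃ S, T.IsSubConstInverse l S := by
  obtain ⟨S, hsurj, hinj⟩ := h
  refine ⟨S, fun y => ?_, fun {x y} hxy => ?_⟩
  · obtain ⟨hy, hTy⟩ := hsurj y
    exact T.mem_graph_iff.mpr
      ⟨⟨S y, hy⟩, rfl, eq_add_of_sub_eq (show T ⟨S y, hy⟩ - l • S y = y from hTy)⟩
  · obtain ⟨x', rfl, rfl⟩ := T.mem_graph_iff.mp hxy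
    exact hinj x'

namespace IsSubConstInverse

variable {T : E →ₗ.[ℂ] E} {l : ℂ} {S : E →L[ℂ] E}

theorem coe_graph_eq (hS : T.IsSubConstInverse l S) :
    (T.graph : Set (E × E)) = {p | S (p.2 - l • p.1) = p.1} := by
  ext ⟨x, y⟩
  refine ⟨hS.apply_sub_smul, fun hxy => ?_⟩
  have := hS.mem_graph (y - l • x)
  rwa [show S (y - l • x) = x from hxy, sub_add_cancel] at this

theorem isClosed (hS : T.IsSubConstInverse l S) : T.IsClosed := by
  rw [LinearPMap.IsClosed, hS.coe_graph_eq]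
  exact isClosed_eq (by fun_prop) continuous_fst

theorem unique {T' : E →ₗ.[ℂ] E} (hS : T.IsSubConstInverse l S)
    (hS' : T'.IsSubConstInverse l S) : T = T' :=
  eq_of_eq_graph (SetLike.coe_injective (hS.coe_graph_eq.trans hS'.coe_graph_eq.symm))

theorem injective (hS : T.IsSubConstInverse l S) : Function.Injective S := by
  refine (injective_iff_map_eq_zero S).mpr fun y hy => ?_
  have := hS.mem_graph y
  rw [hy, smul_zero, add_zero] at this
  exact T.graph_fst_eq_zero_snd this rfl

/-- With `U = 1 + c S`, the operator `U⁻¹ S` inverts `T - (l - c)`. -/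
theorem exists_sub [CompleteSpace E] (hS : T.IsSubConstInverse l S) {c : ℂ}
    (hc : ‖c • S‖ < 1) : ∃ S', T.IsSubConstInverse (l - c) S' := by
  let U := Units.oneSub (-(c • S)) (by rwa [norm_neg])
  set V : E →L[ℂ] E := ↑U⁻¹
  have hU : (U : E →L[ℂ] E) = 1 + c • S := sub_neg_eq_add _ _
  have hVS : Commute V S :=
    Commute.units_inv_left (hU ▸ (Commute.one_left S).add_left ((Commute.refl S).smul_left c))
  have hUV (y : E) : V y + c • S (V y) = y := by
    simpa [hU] using congrArg (· y) U.mul_inv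
  have hVU (y : E) : V (y + c • S y) = y := by
    simpa [hU] using congrArg (· y) U.inv_mul
  refine ⟨V * S, fun y => ?_, fun {x y} hxy => ?_⟩
  · rw [hVS.eq]
    have hy := hUV y
    set v := V y
    change (S v, y + (l - c) • S v) ∈ T.graph
    rw [← hy, show v + c • S v + (l - c) • S v = v + l • S v by module]
    exact hS.mem_graph v
  · change V (S _) = x
    rw [show y - (l - c) • x = (y - l • x) + c • x by module, _root_.map_add, _root_.map_smul,
      hS.apply_sub_smul hxy, hVU]

end IsSubConstInverse

theorem exists_isSubConstInverse_ne_zero [CompleteSpace E] {T : E →ₗ.[ℂ] E}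
    (h : T.pSpectrum ≠ Set.univ) : ∃ l ≠ 0, ∃ S, T.IsSubConstInverse l S := by
  obtain ⟨l, hl⟩ := (Set.ne_univ_iff_exists_notMem _).mp h
  obtain ⟨S, hS⟩ := exists_isSubConstInverse_of_isBddInvertible (not_not.mp hl)
  rcases ne_or_eq l 0 with hl0 | rfl
  · exact ⟨l, hl0, S, hS⟩
  set c : ℂ := (((‖S‖ + 1)⁻¹ : ℝ) : ℂ)
  have hc : ‖c • S‖ < 1 := calc
    ‖c • S‖ ≤ ‖c‖ * ‖S‖ := norm_smul_le c S
    _ = (‖S‖ + 1)⁻¹ * ‖S‖ := by rw [Complex.norm_real, Real.norm_of_nonneg (by positivity)]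
    _ < 1 := by rw [inv_mul_lt_one₀ (by positivity)]; linarith
  have hc0 : 0 - c ≠ 0 := zero_sub c ▸ neg_ne_zero.mpr (Complex.ofReal_ne_zero.mpr (by positivity))
  exact ⟨0 - c, hc0, hS.exists_sub hc⟩

theorem IsClosable.exists_clm_mem_graph [CompleteSpace E] {B : E →ₗ.[ℂ] E} (hB : B.IsClosable)
    (S : E →L[ℂ] E) (hS : ∀ x, S x ∈ B.domain) : ∃ N : E →L[ℂ] E, ∀ x, (S x, N x) ∈ B.graph := by
  let N : E →ₗ[ℂ] E := B.toFun ∘ₗ (S : E →ₗ[ℂ] E).codRestrict B.domain hS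
  have hN (x : E) : (S x, N x) ∈ B.graph := B.mem_graph ⟨S x, hS x⟩
  have hgraph : (N.graph : Set (E × E)) = (Prod.map S id) ⁻¹' B.closure.graph := by
    ext ⟨x, y⟩
    change (x, y) ∈ N.graph ↔ (S x, y) ∈ B.closure.graph
    rw [N.mem_graph_iff]
    refine ⟨fun (hxy : y = N x) => hxy ▸ le_graph_of_le B.le_closure (hN x), fun hxy => ?_⟩
    exact B.closure.mem_graph_snd_inj hxy (le_graph_of_le B.le_closure (hN x)) rfl
  refine ⟨⟨N, N.continuous_of_isClosed_graph ?_⟩, hN⟩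
  rw [hgraph]
  exact hB.closure_isClosed.preimage (by fun_prop)

namespace IsSubConstInverse

section pComp

variable {A B : E →ₗ.[ℂ] E} {m : ℂ} {R M : E →L[ℂ] E}

theorem exists_clm_mem_graph_right [CompleteSpace E] (hR : (A.pComp B).IsSubConstInverse m R)
    (hB : B.IsClosable) : ∃ N : E →L[ℂ] E, ∀ y, (R y, N y) ∈ B.graph :=
  hB.exists_clm_mem_graph R fun y =>
    let ⟨_, hw, _⟩ := mem_graph_pComp_iff.mp (hR.mem_graph y)
    mem_domain_of_mem_graph hw

theorem mem_graph_right_of_pComp (hR : (B.pComp A).IsSubConstInverse m R)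
    (hM : ∀ y, (R y, M y) ∈ A.graph) (y : E) : (M y, y + m • R y) ∈ B.graph := by
  obtain ⟨w, hRw, hwB⟩ := mem_graph_pComp_iff.mp (hR.mem_graph y)
  rwa [A.mem_graph_snd_inj hRw (hM y) rfl] at hwB

theorem mem_graph_pComp_swap_of_mem_graph_left (hR : (B.pComp A).IsSubConstInverse m R)
    (hM : ∀ y, (R y, M y) ∈ A.graph) {u a : E} (hua : (u, a) ∈ A.graph) :
    (M u, a + m • M u) ∈ (A.pComp B).graph :=
  mem_graph_pComp_iff.mpr
    ⟨u + m • R u, hR.mem_graph_right_of_pComp hM u, A.graph.add_mem hua (A.graph.smul_mem m (hM u))⟩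

theorem mem_graph_pComp_swap_of_mem_graph_right (hR : (B.pComp A).IsSubConstInverse m R)
    (hM : ∀ y, (R y, M y) ∈ A.graph) {x b : E} (hxb : (x, b) ∈ B.graph) :
    (M b - x, m • M b) ∈ (A.pComp B).graph := by
  refine mem_graph_pComp_iff.mpr ⟨m • R b, ?_, A.graph.smul_mem m (hM b)⟩
  simpa using B.graph.sub_mem (hR.mem_graph_right_of_pComp hM b) hxb

theorem dense_domain_pComp_swap (hR : (B.pComp A).IsSubConstInverse m R)
    (hM : ∀ y, (R y, M y) ∈ A.graph) (hdA : Dense (A.domain : Set E))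
    (hdB : Dense (B.domain : Set E)) : Dense ((A.pComp B).domain : Set E) := by
  set D := (A.pComp B).domain.topologicalClosure
  have hMD (y : E) : M y ∈ D := by
    refine closure_mono ?_ (image_closure_subset_closure_image M.continuous
      ⟨y, hdA.closure_eq ▸ Set.mem_univ y, rfl⟩)
    rintro _ ⟨u, hu, rfl⟩
    obtain ⟨a, ha⟩ := mem_domain_iff.mp hu
    exact mem_domain_of_mem_graph (hR.mem_graph_pComp_swap_of_mem_graph_left hM ha)
  have hBD : (B.domain : Set E) ⊆ D := by
    intro x hx
    obtain ⟨b, hb⟩ := mem_domain_iff.mp hx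
    have := D.sub_mem (hMD b) (Submodule.le_topologicalClosure _
      (mem_domain_of_mem_graph (hR.mem_graph_pComp_swap_of_mem_graph_right hM hb)))
    rwa [sub_sub_cancel] at this
  exact dense_closure.mp (hdB.mono hBD)

/-- For `(u, a) ∈ graph A`, the vector `q = m⁻¹ (N a - u)` satisfies `A q = R a` and
`q ∈ D(BA)`, and `(u, a) = (N a - m q, a)` is recovered from these two relations. Both are
closed conditions on `(u, a)` because `A` is closable and `BA` is closed. -/
theorem isClosed_left {N : E →L[ℂ] E} (hR : (A.pComp B).IsSubConstInverse m R) (hm : m ≠ 0)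
    (hN : ∀ y, (R y, N y) ∈ B.graph) (hcA : A.IsClosable) (hBA : (B.pComp A).IsClosed) :
    A.IsClosed := by
  have hAN := hR.mem_graph_right_of_pComp hN
  let q : E × E → E := fun p => m⁻¹ • (N p.2 - p.1)
  have hgraph : (A.graph : Set (E × E)) = (fun p => (q p, R p.2)) ⁻¹' A.closure.graph ∩
      (fun p => (q p, N p.2)) ⁻¹' (B.pComp A).graph := by
    ext ⟨u, a⟩
    constructor
    · intro hua
      have hq : (q (u, a), R a) ∈ A.graph := by
        simpa [q, smul_smul, inv_mul_cancel₀ hm] using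
          A.graph.smul_mem m⁻¹ (A.graph.sub_mem (hAN a) hua)
      exact ⟨le_graph_of_le A.le_closure hq, mem_graph_pComp_iff.mpr ⟨R a, hq, hN a⟩⟩
    · rintro ⟨hqA, hqBA⟩
      obtain ⟨w, hqw, -⟩ := mem_graph_pComp_iff.mp hqBA
      obtain rfl : w = R a :=
        A.closure.mem_graph_snd_inj (le_graph_of_le A.le_closure hqw) hqA rfl
      simpa [q, smul_smul, mul_inv_cancel₀ hm] using
        A.graph.sub_mem (hAN a) (A.graph.smul_mem m hqw)
  rw [LinearPMap.IsClosed, hgraph]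
  exact (hcA.closure_isClosed.preimage (by fun_prop)).inter (hBA.preimage (by fun_prop))

end pComp

end IsSubConstInverse

end Banach

section Hilbert

variable {H : Type*} [NormedAddCommGroup H] [InnerProductSpace ℂ H] [CompleteSpace H]

local notation "⟪" x ", " y "⟫" => @inner ℂ _ _ x y

theorem mem_graph_adjoint_iff {T : H →ₗ.[ℂ] H} (hT : Dense (T.domain : Set H)) {z w : H} :
    (z, w) ∈ T†.graph ↔ ∀ a b, (a, b) ∈ T.graph → ⟪w, a⟫ = ⟪z, b⟫ := by
  rw [adjoint_graph_eq_graph_adjoint hT, Submodule.mem_adjoint_iff]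
  refine forall₃_congr fun a b _ => ?_
  rw [sub_eq_zero, ← inner_conj_symm w, ← inner_conj_symm z, (RingHom.injective _).eq_iff, eq_comm]

theorem IsSubConstInverse.adjoint_pComp_swap {A B : H →ₗ.[ℂ] H} {m : ℂ} {R M : H →L[ℂ] H}
    (hR : (B.pComp A).IsSubConstInverse m R) (hM : ∀ y, (R y, M y) ∈ A.graph)
    (hdA : Dense (A.domain : Set H)) (hdB : Dense (B.domain : Set H))
    (hdAB : Dense ((A.pComp B).domain : Set H)) :
    (A.pComp B)† = B†.pComp A† := by
  refine eq_of_eq_graph (Submodule.ext fun ⟨z, w⟩ => ?_)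
  rw [mem_graph_adjoint_iff hdAB, mem_graph_pComp_iff]
  constructor
  · intro h
    refine ⟨M.adjoint (w - (starRingEnd ℂ) m • z),
      (mem_graph_adjoint_iff hdA).mpr fun u a hua => ?_,
      (mem_graph_adjoint_iff hdB).mpr fun x b hxb => ?_⟩
    · have := h _ _ (hR.mem_graph_pComp_swap_of_mem_graph_left hM hua)
      rw [inner_add_right, inner_smul_right] at this
      rw [adjoint_inner_left, inner_sub_left, inner_smul_left, Complex.conj_conj, this]
      ring
    · have := h _ _ (hR.mem_graph_pComp_swap_of_mem_graph_right hM hxb)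
      rw [inner_sub_right, inner_smul_right] at this
      rw [adjoint_inner_left, inner_sub_left, inner_smul_left, Complex.conj_conj, ← this]
      ring
  · rintro ⟨v, hzv, hvw⟩ x y hxy
    obtain ⟨b, hxb, hby⟩ := mem_graph_pComp_iff.mp hxy
    rw [(mem_graph_adjoint_iff hdB).mp hvw x b hxb, (mem_graph_adjoint_iff hdA).mp hzv b y hby]

namespace IsSubConstInverse

variable {T : H →ₗ.[ℂ] H} {l : ℂ} {S : H →L[ℂ] H}

theorem adjoint (hS : T.IsSubConstInverse l S) (hT : Dense (T.domain : Set H)) :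
    T†.IsSubConstInverse ((starRingEnd ℂ) l) S.adjoint := by
  have hST {x y : H} (hxy : (x, y) ∈ T.graph) : S y = x + l • S x := by
    calc S y = S (y - l • x) + l • S x := by
          rw [← _root_.map_smul, ← _root_.map_add, sub_add_cancel]
      _ = x + l • S x := by rw [hS.apply_sub_smul hxy]
  refine ⟨fun y => (mem_graph_adjoint_iff hT).mpr fun x t hxt => ?_, fun {z w} hzw => ?_⟩
  · rw [adjoint_inner_left, hST hxt, inner_add_left, inner_smul_left, Complex.conj_conj,
      inner_add_right, inner_smul_right, adjoint_inner_left]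
  · refine ext_inner_right ℂ fun v => ?_
    have := (mem_graph_adjoint_iff hT).mp hzw _ _ (hS.mem_graph v)
    rw [adjoint_inner_left, inner_sub_left, inner_smul_left, Complex.conj_conj, this,
      inner_add_right, inner_smul_right]
    ring

theorem dense_adjoint_domain (hS : T.IsSubConstInverse l S) (hT : Dense (T.domain : Set H)) :
    Dense (T†.domain : Set H) := by
  have hrange : Dense ((S.adjoint.range : Submodule ℂ H) : Set H) := by
    rw [Submodule.dense_iff_topologicalClosure_eq_top, Submodule.topologicalClosure_eq_top_iff,
      ContinuousLinearMap.orthogonal_range, ContinuousLinearMap.adjoint_adjoint]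
    exact LinearMap.ker_eq_bot.mpr hS.injective
  refine hrange.mono ?_
  rintro _ ⟨y, rfl⟩
  exact mem_domain_of_mem_graph ((hS.adjoint hT).mem_graph y)

theorem adjoint_adjoint (hS : T.IsSubConstInverse l S) (hT : Dense (T.domain : Set H)) :
    T†† = T := by
  have := (hS.adjoint hT).adjoint (hS.dense_adjoint_domain hT)
  rw [Complex.conj_conj, ContinuousLinearMap.adjoint_adjoint] at this
  exact this.unique hS

end IsSubConstInverse

end Hilbert

end LinearPMap

/-- if `σ(AB) ≠ ℂ` and `σ(BA) ≠ ℂ` for densely defined closable `A, B`, then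
`A, B, AB, BA` are closed, `AB` and `BA` are densely defined, `(AB)* = B*A*`,
`(BA)* = A*B*`, `(A*B*)* = BA` and `(B*A*)* = AB`. -/
theorem statement_3 {H : Type*} [NormedAddCommGroup H] [InnerProductSpace ℂ H] [CompleteSpace H]
    (A B : H →ₗ.[ℂ] H)
    (hdA : Dense (A.domain : Set H)) (hdB : Dense (B.domain : Set H))
    (hcA : A.IsClosable) (hcB : B.IsClosable)
    (hsAB : (A.pComp B).pSpectrum ≠ Set.univ) (hsBA : (B.pComp A).pSpectrum ≠ Set.univ) :
    A.IsClosed ∧ B.IsClosed ∧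
      Dense ((A.pComp B).domain : Set H) ∧ Dense ((B.pComp A).domain : Set H) ∧
      (A.pComp B).IsClosed ∧ (B.pComp A).IsClosed ∧
      (A.pComp B).adjoint = B.adjoint.pComp A.adjoint ∧
      (B.pComp A).adjoint = A.adjoint.pComp B.adjoint ∧
      (A.adjoint.pComp B.adjoint).adjoint = B.pComp A ∧
      (B.adjoint.pComp A.adjoint).adjoint = A.pComp B := by
  obtain ⟨l, hl, S, hS⟩ := exists_isSubConstInverse_ne_zero hsAB
  obtain ⟨m, hm, R, hR⟩ := exists_isSubConstInverse_ne_zero hsBA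
  obtain ⟨N, hN⟩ := hS.exists_clm_mem_graph_right hcB
  obtain ⟨M, hM⟩ := hR.exists_clm_mem_graph_right hcA
  have hdAB := hR.dense_domain_pComp_swap hM hdA hdB
  have hdBA := hS.dense_domain_pComp_swap hN hdB hdA
  have hadjAB := hR.adjoint_pComp_swap hM hdA hdB hdAB
  have hadjBA := hS.adjoint_pComp_swap hN hdB hdA hdBA
  refine ⟨hS.isClosed_left hl hN hcA hR.isClosed, hR.isClosed_left hm hM hcB hS.isClosed,
    hdAB, hdBA, hS.isClosed, hR.isClosed, hadjAB, hadjBA, ?_, ?_⟩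
  · rw [← hadjBA, hR.adjoint_adjoint hdBA]
  · rw [← hadjAB, hS.adjoint_adjoint hdAB]
end
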